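/- Let A be a T-brace and let a ∈ ζ₂(⋆,A). If a has infinite additive order, then x ⋆ a ∈ ⟨a ⋆ a⟩ and a ⋆ x ∈ ⟨a ⋆ a⟩ for all elements x ∈ A. -/

import Mathlib

/-!
Basic theory of left braces (skew left braces of abelian type), following
Dixon–Kurdachenko–Subbotin, "On the structure of braces whose subideals are ideals".
-/

universe u v

/-- A left brace: an abelian group `(A,+)`, a group `(A,·)`, satisfying
`a(b+c) = ab + ac - a`.  (The additive and multiplicative identities then coincide.) -/
class LeftBrace (A : Type u) extends AddCommGroup A, Group A where
  mul_add_eq : ∀ a b c : A, a * (b + c) = a * b + a * c - a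

namespace LeftBrace

variable {A : Type u} [LeftBrace A]

/-- The star operation `a ⋆ b = ab - a - b`. -/
def bstar (a b : A) : A := a * b - a - b

/-- A subset of a left brace is a subbrace if it is closed under the additive-group
and multiplicative-group operations (equivalently, it is a left brace under the
restricted operations). -/
structure IsSubbrace (S : Set A) : Prop where
  zero_mem : (0 : A) ∈ S
  add_mem : ∀ {a b : A}, a ∈ S → b ∈ S → a + b ∈ S
  neg_mem : ∀ {a : A}, a ∈ S → -a ∈ S
  mul_mem : ∀ {a b : A}, a ∈ S → b ∈ S → a * b ∈ S
  inv_mem : ∀ {a : A}, a ∈ S → a⁻¹ ∈ S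

/-- `I` is an ideal of the subbrace `J`: `I ⊆ J`, both are subbraces, and
`a ⋆ z, z ⋆ a ∈ I` for all `a ∈ J`, `z ∈ I`. -/
structure IsIdealIn (I J : Set A) : Prop where
  subset : I ⊆ J
  subbrace : IsSubbrace I
  ambient_subbrace : IsSubbrace J
  star_mem_left : ∀ a ∈ J, ∀ z ∈ I, bstar a z ∈ I
  star_mem_right : ∀ a ∈ J, ∀ z ∈ I, bstar z a ∈ I

/-- `I` is an ideal of the brace `A`. -/
def IsIdeal (I : Set A) : Prop := IsIdealIn I (Set.univ : Set A)

/-- `A` is a T-brace if being an ideal is a transitive relation: an ideal of an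
ideal of `A` is an ideal of `A`. -/
def IsTBrace (A : Type u) [LeftBrace A] : Prop :=
  ∀ I J : Set A, IsIdealIn I J → IsIdeal J → IsIdeal I

/-- The `⋆`-center `ζ(⋆,A) = {a | a ⋆ x = x ⋆ a = 0 for all x}`. -/
def starCenter (A : Type u) [LeftBrace A] : Set A :=
  {a : A | ∀ x : A, bstar a x = 0 ∧ bstar x a = 0}

/-- The preimage in `A` of the `⋆`-center of the quotient of `A` by (the ideal) `S`:
`a` belongs to it iff `a ⋆ x ∈ S` and `x ⋆ a ∈ S` for every `x ∈ A`. -/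
def nextCenter (A : Type u) [LeftBrace A] (S : Set A) : Set A :=
  {a : A | ∀ x : A, bstar a x ∈ S ∧ bstar x a ∈ S}

/-- The upper `⋆`-central series, indexed by naturals:
`ζ₀(⋆,A) = 0` and `ζ_{n+1}(⋆,A)/ζ_n(⋆,A) = ζ(⋆, A/ζ_n(⋆,A))`. -/
def zetaNat (A : Type u) [LeftBrace A] : ℕ → Set A
  | 0 => ({0} : Set A)
  | n + 1 => nextCenter A (zetaNat A n)

/-- The upper `⋆`-central series, indexed by ordinals (unions at limit ordinals). -/
noncomputable def zetaOrd (A : Type u) [LeftBrace A] (o : Ordinal.{v}) : Set A :=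
  Ordinal.limitRecOn o (({0} : Set A))
    (fun _ ih => nextCenter A ih)
    (fun o _ ih => ⋃ (o' : Ordinal) (h : o' < o), ih o' h)

/-- The upper `⋆`-hypercenter `ζ_∞(⋆,A)`: the final (stable) term of the upper
`⋆`-central series, i.e. the union of all its terms. -/
noncomputable def starHypercenter (A : Type u) [LeftBrace A] : Set A :=
  ⋃ o : Ordinal.{u}, zetaOrd A o

/-- `A` is `⋆`-hypercentral if `A = ζ_γ(⋆,A)` for some ordinal `γ`. -/
def IsStarHypercentral (A : Type u) [LeftBrace A] : Prop :=
  ∃ γ : Ordinal.{u}, zetaOrd A γ = (Set.univ : Set A)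

/-- `K ⋆ L`: the additive subgroup of `(A,+)` generated by all `x ⋆ y`, `x ∈ K`, `y ∈ L`. -/
def setStar (K L : Set A) : AddSubgroup A :=
  AddSubgroup.closure {z : A | ∃ x ∈ K, ∃ y ∈ L, z = bstar x y}

/-- `rightStarSeries A n = A^{(n+1)}`, where `A^{(1)} = A` and `A^{(n+1)} = A^{(n)} ⋆ A`. -/
def rightStarSeries (A : Type u) [LeftBrace A] : ℕ → Set A
  | 0 => (Set.univ : Set A)
  | n + 1 => ((setStar (rightStarSeries A n) (Set.univ : Set A) : AddSubgroup A) : Set A)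

/-- `leftStarSeries A n = A^{n+1}`, where `A^1 = A` and `A^{n+1} = A ⋆ A^n`. -/
def leftStarSeries (A : Type u) [LeftBrace A] : ℕ → Set A
  | 0 => (Set.univ : Set A)
  | n + 1 => ((setStar (Set.univ : Set A) (leftStarSeries A n) : AddSubgroup A) : Set A)

/-- `A` is Smoktunowicz-nilpotent if `A^{(n)} = A^k = 0` for some naturals `n, k`. -/
def IsSmoktunowiczNilpotent (A : Type u) [LeftBrace A] : Prop :=
  ∃ n k : ℕ, rightStarSeries A n = ({0} : Set A) ∧ leftStarSeries A k = ({0} : Set A)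

/-- The subbrace generated by a subset `M`: the intersection of all subbraces containing `M`. -/
def braceClosure (M : Set A) : Set A := ⋂₀ {S : Set A | IsSubbrace S ∧ M ⊆ S}

end LeftBrace

/-!
For `a ∈ ζ₂(⋆,A)` every `a ⋆ x` and `x ⋆ a` is `⋆`-central. This makes `ζ₂(⋆,A)` an additive
subgroup on which `⋆` is additive in its left argument as well, so that
`(m a + u) ⋆ (n a + v) = mn (a ⋆ a)` for `⋆`-central `u, v`. Consequently `⟨a⟩ + ζ(⋆,A)` is an
ideal of `A` and `⟨a⟩ + ⟨a ⋆ a⟩` is an ideal of it; in a T-brace the latter is therefore an ideal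
of `A`, so it contains `x ⋆ a` and `a ⋆ x`. If such a central element were `m a + n (a ⋆ a)` with
`m ≠ 0`, then `m a` would be central, which kills `m (a ⋆ a)` and `m (x ⋆ a)`, `m (a ⋆ x)`, and
hence `m² a = 0`.
-/

namespace LeftBrace

variable {A : Type u} [LeftBrace A]

local infixl:70 " ⋆ " => bstar

open AddSubgroup (zmultiples mem_zmultiples mem_zmultiples_iff zmultiples_le zsmul_mem_zmultiples
  mem_sup mem_sup_right)

def lambdaHom (b : A) : A →+ A :=
  AddMonoidHom.mk' (fun y => b * y - b) fun y z => by
    rw [mul_add_eq]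
    abel

lemma lambdaHom_apply (b y : A) : lambdaHom b y = b * y - b := rfl

lemma lambdaHom_mul (b c x : A) : lambdaHom (b * c) x = lambdaHom b (lambdaHom c x) := by
  rw [lambdaHom_apply c, map_sub]
  simp only [lambdaHom_apply, mul_assoc]
  abel

protected lemma mul_zero (b : A) : b * 0 = b :=
  sub_eq_zero.1 (map_zero (lambdaHom b))

protected lemma one_eq_zero : (1 : A) = 0 :=
  (LeftBrace.mul_zero 1).symm.trans (one_mul 0)

def bstarHom (b : A) : A →+ A := lambdaHom b - AddMonoidHom.id A

lemma bstarHom_apply (b x : A) : bstarHom b x = b ⋆ x := rfl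

lemma bstar_add (b x y : A) : b ⋆ (x + y) = b ⋆ x + b ⋆ y := map_add (bstarHom b) x y

lemma bstar_neg (b x : A) : b ⋆ -x = -(b ⋆ x) := map_neg (bstarHom b) x

lemma bstar_zsmul (b : A) (m : ℤ) (x : A) : b ⋆ (m • x) = m • (b ⋆ x) :=
  map_zsmul (bstarHom b) m x

lemma bstar_zero (b : A) : b ⋆ 0 = 0 := map_zero (bstarHom b)

lemma zero_bstar (x : A) : (0 : A) ⋆ x = 0 := by
  have h : (0 : A) * x = x := by rw [← LeftBrace.one_eq_zero, one_mul]
  rw [bstar, h, sub_zero, sub_self]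

lemma mul_eq_add_add_bstar (b c : A) : b * c = b + c + b ⋆ c := by
  rw [bstar]
  abel

lemma mul_bstar (b c x : A) : (b * c) ⋆ x = b ⋆ (c ⋆ x) + c ⋆ x + b ⋆ x := by
  simp only [← bstarHom_apply, bstarHom, AddMonoidHom.sub_apply, AddMonoidHom.id_apply,
    lambdaHom_mul, map_sub]
  abel

lemma add_bstar_of_mem_starCenter {u : A} (hu : u ∈ starCenter A) (b x : A) :
    (b + u) ⋆ x = b ⋆ x := by
  have hbu : b * u = b + u := by rw [mul_eq_add_add_bstar, (hu b).2, add_zero]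
  rw [← hbu, mul_bstar, (hu x).1, bstar_zero, zero_add, zero_add]

lemma bstar_add_of_mem_starCenter {u : A} (hu : u ∈ starCenter A) (x y : A) :
    x ⋆ (y + u) = x ⋆ y := by
  rw [bstar_add, (hu x).2, add_zero]

def starCenterAddSubgroup (A : Type u) [LeftBrace A] : AddSubgroup A where
  carrier := starCenter A
  zero_mem' x := ⟨zero_bstar x, bstar_zero x⟩
  add_mem' {u v} hu hv x :=
    ⟨by rw [add_bstar_of_mem_starCenter hv, (hu x).1],
      by rw [bstar_add, (hu x).2, (hv x).2, add_zero]⟩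
  neg_mem' {u} hu x :=
    ⟨by rw [← add_bstar_of_mem_starCenter hu, neg_add_cancel, zero_bstar],
      by rw [bstar_neg, (hu x).2, neg_zero]⟩

lemma zetaNat_two : zetaNat A 2 = nextCenter A (starCenter A) := by
  show nextCenter A (nextCenter A {0}) = _
  congr 1

lemma add_bstar_of_mem_nextCenter {c : A} (hc : c ∈ nextCenter A (starCenter A)) (b x : A) :
    (b + c) ⋆ x = b ⋆ x + c ⋆ x := by
  rw [← add_bstar_of_mem_starCenter (hc b).2 (b + c), ← mul_eq_add_add_bstar, mul_bstar,
    ((hc x).1 b).2, zero_add, add_comm]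

def starCenter₂AddSubgroup (A : Type u) [LeftBrace A] : AddSubgroup A where
  carrier := nextCenter A (starCenter A)
  zero_mem' x := by
    rw [zero_bstar, bstar_zero]
    exact ⟨(starCenterAddSubgroup A).zero_mem, (starCenterAddSubgroup A).zero_mem⟩
  add_mem' {b c} hb hc x := by
    rw [add_bstar_of_mem_nextCenter hc, bstar_add]
    exact ⟨(starCenterAddSubgroup A).add_mem (hb x).1 (hc x).1,
      (starCenterAddSubgroup A).add_mem (hb x).2 (hc x).2⟩
  neg_mem' {c} hc x := by
    have h := add_bstar_of_mem_nextCenter hc (-c) x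
    rw [neg_add_cancel, zero_bstar, eq_comm, add_eq_zero_iff_eq_neg] at h
    rw [h, bstar_neg]
    exact ⟨(starCenterAddSubgroup A).neg_mem (hc x).1, (starCenterAddSubgroup A).neg_mem (hc x).2⟩

lemma zsmul_bstar {c : A} (hc : c ∈ nextCenter A (starCenter A)) (m : ℤ) (x : A) :
    (m • c) ⋆ x = m • (c ⋆ x) :=
  let bstarLeft : starCenter₂AddSubgroup A →+ A :=
    AddMonoidHom.mk' (fun b => (b : A) ⋆ x) fun b c => add_bstar_of_mem_nextCenter c.2 b x
  map_zsmul bstarLeft m ⟨c, hc⟩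

lemma starCenterAddSubgroup_le : starCenterAddSubgroup A ≤ starCenter₂AddSubgroup A := by
  intro u hu x
  rw [(hu x).1, (hu x).2]
  exact ⟨(starCenterAddSubgroup A).zero_mem, (starCenterAddSubgroup A).zero_mem⟩

lemma isSubbrace_univ : IsSubbrace (Set.univ : Set A) :=
  ⟨trivial, fun _ _ => trivial, fun _ => trivial, fun _ _ => trivial, fun _ => trivial⟩

lemma isIdeal_of_le {S : AddSubgroup A} (hS : IsSubbrace (S : Set A))
    (h₁ : starCenterAddSubgroup A ≤ S) (h₂ : S ≤ starCenter₂AddSubgroup A) :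
    IsIdeal (S : Set A) where
  subset := Set.subset_univ _
  subbrace := hS
  ambient_subbrace := isSubbrace_univ
  star_mem_left _ _ _ hz := h₁ (h₂ hz _).2
  star_mem_right _ _ _ hz := h₁ (h₂ hz _).1

lemma inv_eq_neg_sub_bstar_neg {z : A} (h : z ⋆ -z ∈ starCenter A) : z⁻¹ = -z - z ⋆ -z :=
  inv_eq_of_mul_eq_one_right <| by
    rw [mul_eq_add_add_bstar, sub_eq_add_neg,
      bstar_add_of_mem_starCenter ((starCenterAddSubgroup A).neg_mem h), LeftBrace.one_eq_zero]
    abel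

lemma isSubbrace_of_bstar_mem {S : AddSubgroup A}
    (h : ∀ z ∈ S, ∀ w ∈ S, z ⋆ w ∈ S ∧ z ⋆ w ∈ starCenter A) : IsSubbrace (S : Set A) where
  zero_mem := S.zero_mem
  add_mem := S.add_mem
  neg_mem := S.neg_mem
  mul_mem {z w} hz hw := by
    rw [SetLike.mem_coe, mul_eq_add_add_bstar]
    exact S.add_mem (S.add_mem hz hw) (h z hz w hw).1
  inv_mem {z} hz := by
    have hzz := h z hz (-z) (S.neg_mem hz)
    rw [SetLike.mem_coe, inv_eq_neg_sub_bstar_neg hzz.2]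
    exact S.sub_mem (S.neg_mem hz) hzz.1

lemma mem_zmultiples_sup_iff {a z : A} {U : AddSubgroup A} :
    z ∈ zmultiples a ⊔ U ↔ ∃ m : ℤ, ∃ u ∈ U, m • a + u = z := by
  simp [mem_sup, mem_zmultiples_iff]

section Zeta2

variable {a : A} (ha : a ∈ nextCenter A (starCenter A))
include ha

lemma zsmul_add_bstar_zsmul_add {u v : A} (hu : u ∈ starCenter A) (hv : v ∈ starCenter A)
    (m n : ℤ) : (m • a + u) ⋆ (n • a + v) = (m * n) • (a ⋆ a) := by
  rw [add_bstar_of_mem_starCenter hu, bstar_add_of_mem_starCenter hv, zsmul_bstar ha, bstar_zsmul,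
    smul_smul]

lemma bstar_mem_of_mem_zmultiples_sup {U : AddSubgroup A} (hU : U ≤ starCenterAddSubgroup A)
    (hd : a ⋆ a ∈ U) {z w : A} (hz : z ∈ zmultiples a ⊔ U)
    (hw : w ∈ zmultiples a ⊔ starCenterAddSubgroup A) : z ⋆ w ∈ U ∧ w ⋆ z ∈ U := by
  obtain ⟨m, u, hu, rfl⟩ := mem_zmultiples_sup_iff.1 hz
  obtain ⟨n, v, hv, rfl⟩ := mem_zmultiples_sup_iff.1 hw
  rw [zsmul_add_bstar_zsmul_add ha (hU hu) hv, zsmul_add_bstar_zsmul_add ha hv (hU hu)]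
  exact ⟨U.zsmul_mem hd _, U.zsmul_mem hd _⟩

lemma isSubbrace_zmultiples_sup {U : AddSubgroup A} (hU : U ≤ starCenterAddSubgroup A)
    (hd : a ⋆ a ∈ U) : IsSubbrace ((zmultiples a ⊔ U : AddSubgroup A) : Set A) :=
  isSubbrace_of_bstar_mem fun _ hz _ hw =>
    have h := (bstar_mem_of_mem_zmultiples_sup ha hU hd hz (sup_le_sup_left hU _ hw)).1
    ⟨mem_sup_right h, hU h⟩

lemma isIdeal_zmultiples_sup_starCenter :
    IsIdeal ((zmultiples a ⊔ starCenterAddSubgroup A : AddSubgroup A) : Set A) :=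
  isIdeal_of_le (isSubbrace_zmultiples_sup ha le_rfl (ha a).1) le_sup_right
    (sup_le (zmultiples_le.2 ha) starCenterAddSubgroup_le)

lemma isIdealIn_zmultiples_sup_zmultiples :
    IsIdealIn ((zmultiples a ⊔ zmultiples (a ⋆ a) : AddSubgroup A) : Set A)
      (zmultiples a ⊔ starCenterAddSubgroup A : AddSubgroup A) := by
  have hU : zmultiples (a ⋆ a) ≤ starCenterAddSubgroup A := zmultiples_le.2 (ha a).1
  have hd := mem_zmultiples (a ⋆ a)
  have hmem {b z : A} (hb : b ∈ zmultiples a ⊔ starCenterAddSubgroup A)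
      (hz : z ∈ zmultiples a ⊔ zmultiples (a ⋆ a)) :=
    bstar_mem_of_mem_zmultiples_sup ha hU hd hz hb
  exact
    { subset := sup_le_sup_left hU _
      subbrace := isSubbrace_zmultiples_sup ha hU hd
      ambient_subbrace := isSubbrace_zmultiples_sup ha le_rfl (ha a).1
      star_mem_left := fun _ hb _ hz => mem_sup_right (hmem hb hz).2
      star_mem_right := fun _ hb _ hz => mem_sup_right (hmem hb hz).1 }

lemma zsmul_bstar_eq_zero_of_zsmul_mem_starCenter {m : ℤ} (hm : m • a ∈ starCenter A) (x : A) :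
    m • (x ⋆ a) = 0 ∧ m • (a ⋆ x) = 0 :=
  ⟨by rw [← bstar_zsmul]; exact (hm x).2, by rw [← zsmul_bstar ha]; exact (hm x).1⟩

lemma mem_zmultiples_of_mem_zmultiples_sup (hord : ¬IsOfFinAddOrder a) {w : A}
    (hw : w ∈ zmultiples a ⊔ zmultiples (a ⋆ a)) (hwC : w ∈ starCenter A)
    (hann : ∀ m : ℤ, m • a ∈ starCenter A → m • w = 0) : w ∈ zmultiples (a ⋆ a) := by
  obtain ⟨m, _, ⟨n, rfl⟩, rfl⟩ := mem_zmultiples_sup_iff.1 hw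
  obtain rfl | hm := eq_or_ne m 0
  · rw [zero_smul, zero_add]
    exact zsmul_mem_zmultiples _ _
  refine absurd (isOfFinAddOrder_iff_zsmul_eq_zero.2 ⟨m * m, mul_ne_zero hm hm, ?_⟩) hord
  have hma : m • a ∈ starCenterAddSubgroup A := by
    simpa using
      (starCenterAddSubgroup A).sub_mem hwC ((starCenterAddSubgroup A).zsmul_mem (ha a).1 n)
  have hmd : m • (a ⋆ a) = 0 := (zsmul_bstar_eq_zero_of_zsmul_mem_starCenter ha hma a).1
  calc (m * m) • a = m • (m • a + n • (a ⋆ a)) := by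
        rw [smul_add, smul_comm m n, hmd, smul_zero, add_zero, mul_smul]
    _ = 0 := hann m hma

end Zeta2

end LeftBrace

open LeftBrace in
/-- **Lemma.** Let `A` be a T-brace and `a ∈ ζ₂(⋆,A)` of infinite additive order.
Then `x ⋆ a, a ⋆ x ∈ ⟨a ⋆ a⟩` for all `x ∈ A`. -/
theorem bstar_mem_zmultiples_of_infinite_order
    {A : Type u} [LeftBrace A] (hT : IsTBrace A) (a : A) (ha : a ∈ zetaNat A 2)
    (hord : ¬ IsOfFinAddOrder a) :
    ∀ x : A, bstar x a ∈ AddSubgroup.zmultiples (bstar a a) ∧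
      bstar a x ∈ AddSubgroup.zmultiples (bstar a a) := by
  rw [zetaNat_two] at ha
  let I : AddSubgroup A := .zmultiples a ⊔ .zmultiples (bstar a a)
  have hI : IsIdeal (I : Set A) :=
    hT _ _ (isIdealIn_zmultiples_sup_zmultiples ha) (isIdeal_zmultiples_sup_starCenter ha)
  have haI : a ∈ I := AddSubgroup.mem_sup_left (AddSubgroup.mem_zmultiples a)
  intro x
  have hann (m : ℤ) (hm : m • a ∈ starCenter A) :=
    zsmul_bstar_eq_zero_of_zsmul_mem_starCenter ha hm x
  exact ⟨mem_zmultiples_of_mem_zmultiples_sup ha hord (hI.star_mem_left x trivial a haI) (ha x).2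
      fun m hm => (hann m hm).1,
    mem_zmultiples_of_mem_zmultiples_sup ha hord (hI.star_mem_right x trivial a haI) (ha x).1
      fun m hm => (hann m hm).2⟩
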